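/- arXiv:math/0603232 — 5 statements merged into one kernel-verified Lean document; each statement's English description precedes it below -/
import Mathlib

section
/- For 1 ≤ i ≤ n, the number of binary strings of length n with no two adjacent 1's and with a 1 in position i equals F_i · F_{n-i+1}. -/
abbrev FibValid (m : ℕ) (σ : Fin m → Bool) : Prop :=
  ∀ j k : Fin m, (k : ℕ) = (j : ℕ) + 1 → ¬(σ j = true ∧ σ k = true)

abbrev FibS (m : ℕ) := {σ : Fin m → Bool // FibValid m σ}

/-- drop-last equiv: strings of length m+1 ending in false ≃ strings of length m -/
def fibE1 (m : ℕ) : {x : FibS (m+1) // x.1 ⟨m, Nat.lt_succ_self m⟩ = false} ≃ FibS m where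
  toFun x := ⟨fun j => x.1.1 ⟨j, by omega⟩, by
    intro j k hk ⟨h1, h2⟩
    exact x.1.2 ⟨j, by omega⟩ ⟨k, by omega⟩ hk ⟨h1, h2⟩⟩
  invFun y := ⟨⟨fun j => if h : (j : ℕ) < m then y.1 ⟨j, h⟩ else false, by
    intro j k hk hh
    obtain ⟨h1, h2⟩ := hh
    dsimp only at h1 h2
    by_cases hkm : (k : ℕ) < m
    · have hjm : (j : ℕ) < m := by omega
      rw [dif_pos hjm] at h1
      rw [dif_pos hkm] at h2
      exact y.2 ⟨j, hjm⟩ ⟨k, hkm⟩ hk ⟨h1, h2⟩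
    · rw [dif_neg hkm] at h2
      exact absurd h2 (by simp)⟩, by
    simp⟩
  left_inv x := by
    apply Subtype.ext; apply Subtype.ext
    funext j
    dsimp only
    by_cases h : (j : ℕ) < m
    · rw [dif_pos h]
    · have hjm : (j : ℕ) = m := by omega
      rw [dif_neg h, show j = (⟨m, Nat.lt_succ_self m⟩ : Fin (m+1)) from Fin.ext hjm,
        x.2]
  right_inv y := by
    apply Subtype.ext
    funext j
    dsimp only
    rw [dif_pos (show ((⟨(j : ℕ), by omega⟩ : Fin (m+1)) : ℕ) < m from j.2)]

/-- drop-last-two equiv: strings of length m+2 ending in true ≃ strings of length m -/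
def fibE2 (m : ℕ) : {x : FibS (m+2) // x.1 ⟨m+1, by omega⟩ = true} ≃ FibS m where
  toFun x := ⟨fun j => x.1.1 ⟨j, by omega⟩, by
    intro j k hk ⟨h1, h2⟩
    exact x.1.2 ⟨j, by omega⟩ ⟨k, by omega⟩ hk ⟨h1, h2⟩⟩
  invFun y := ⟨⟨fun j => if h : (j : ℕ) < m then y.1 ⟨j, h⟩
      else if (j : ℕ) = m + 1 then true else false, by
    intro j k hk hh
    obtain ⟨h1, h2⟩ := hh
    dsimp only at h1 h2
    by_cases hkm : (k : ℕ) < m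
    · have hjm : (j : ℕ) < m := by omega
      rw [dif_pos hjm] at h1
      rw [dif_pos hkm] at h2
      exact y.2 ⟨j, hjm⟩ ⟨k, hkm⟩ hk ⟨h1, h2⟩
    · by_cases hkm1 : (k : ℕ) = m + 1
      · have hj : (j : ℕ) = m := by omega
        rw [dif_neg (by omega), if_neg (by omega)] at h1
        exact absurd h1 (by simp)
      · rw [dif_neg hkm, if_neg hkm1] at h2
        exact absurd h2 (by simp)⟩, by
    dsimp only
    rw [dif_neg (show ¬ (m + 1 < m) by omega), if_pos rfl]⟩
  left_inv x := by
    apply Subtype.ext; apply Subtype.ext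
    funext j
    dsimp only
    by_cases h : (j : ℕ) < m
    · rw [dif_pos h]
    · by_cases h1 : (j : ℕ) = m + 1
      · rw [dif_neg h, if_pos h1,
          show j = (⟨m+1, by omega⟩ : Fin (m+2)) from Fin.ext h1, x.2]
      · have hj : (j : ℕ) = m := by omega
        rw [dif_neg h, if_neg h1]
        have hv := x.1.2 j ⟨m+1, by omega⟩ (by rw [hj])
        have ht : x.1.1 ⟨m+1, by omega⟩ = true := x.2
        by_contra hc
        exact hv ⟨(Bool.not_eq_false _).mp (Ne.symm hc), ht⟩
  right_inv y := by
    apply Subtype.ext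
    funext j
    dsimp only
    rw [dif_pos (show ((⟨(j : ℕ), by omega⟩ : Fin (m+2)) : ℕ) < m from j.2)]

theorem card_FibS : ∀ m, Nat.card (FibS m) = Nat.fib (m + 2)
  | 0 => by
    rw [Nat.card_eq_fintype_card]
    decide
  | 1 => by
    rw [Nat.card_eq_fintype_card]
    decide
  | (m+2) => by
    have h1 := card_FibS m
    have h2 := card_FibS (m+1)
    have e : FibS (m+2) ≃
        {x : FibS (m+2) // x.1 ⟨m+1, by omega⟩ = true} ⊕
        {x : FibS (m+2) // ¬ (x.1 ⟨m+1, by omega⟩ = true)} :=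
      (Equiv.sumCompl _).symm
    have e2 : {x : FibS (m+2) // ¬ (x.1 ⟨m+1, by omega⟩ = true)} ≃
        {x : FibS (m+2) // x.1 ⟨m+1, by omega⟩ = false} :=
      Equiv.subtypeEquivRight (by intro x; simp)
    have hcard := Nat.card_congr e
    rw [Nat.card_sum, Nat.card_congr (fibE2 m), Nat.card_congr (e2.trans (fibE1 (m+1))),
      h1, h2] at hcard
    have hf := Nat.fib_add_two (n := m + 2)
    have he : m + 2 + 1 = m + 1 + 2 := by omega
    rw [he] at hf
    omega

/-- glue function for the split -/
def fibGlue (n a : ℕ) (ha : a < n) (τ : Fin (a-1) → Bool) (ρ : Fin (n-a-2) → Bool) :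
    Fin n → Bool :=
  fun m => if h : (m : ℕ) < a - 1 then τ ⟨m, h⟩
    else if (m : ℕ) = a then true
    else if h : a + 2 ≤ (m : ℕ) then ρ ⟨(m : ℕ) - (a+2), by omega⟩
    else false

theorem fibGlue_left {n a : ℕ} (ha : a < n) (τ : Fin (a-1) → Bool) (ρ : Fin (n-a-2) → Bool)
    (m : Fin n) (h : (m : ℕ) < a - 1) : fibGlue n a ha τ ρ m = τ ⟨m, h⟩ := by
  simp only [fibGlue]; rw [dif_pos h]

theorem fibGlue_a {n a : ℕ} (ha : a < n) (τ : Fin (a-1) → Bool) (ρ : Fin (n-a-2) → Bool)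
    (m : Fin n) (h : (m : ℕ) = a) : fibGlue n a ha τ ρ m = true := by
  simp only [fibGlue]; rw [dif_neg (by omega), if_pos h]

theorem fibGlue_right {n a : ℕ} (ha : a < n) (τ : Fin (a-1) → Bool) (ρ : Fin (n-a-2) → Bool)
    (m : Fin n) (h : a + 2 ≤ (m : ℕ)) :
    fibGlue n a ha τ ρ m = ρ ⟨(m : ℕ) - (a+2), by omega⟩ := by
  simp only [fibGlue]; rw [dif_neg (by omega), if_neg (by omega), dif_pos h]

theorem fibGlue_gap {n a : ℕ} (ha : a < n) (τ : Fin (a-1) → Bool) (ρ : Fin (n-a-2) → Bool)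
    (m : Fin n) (h1 : ¬ (m : ℕ) < a - 1) (h2 : (m : ℕ) ≠ a) (h3 : ¬ a + 2 ≤ (m : ℕ)) :
    fibGlue n a ha τ ρ m = false := by
  simp only [fibGlue]; rw [dif_neg h1, if_neg h2, dif_neg h3]

theorem fib_split (n a : ℕ) (ha : a < n) :
    Nat.card {σ : Fin n → Bool // FibValid n σ ∧ σ ⟨a, ha⟩ = true} =
    Nat.fib (a + 1) * Nat.fib (n - a) := by
  have key : {σ : Fin n → Bool // FibValid n σ ∧ σ ⟨a, ha⟩ = true} ≃
      FibS (a-1) × FibS (n-a-2) := {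
    toFun := fun σ =>
      (⟨fun j => σ.1 ⟨j, by omega⟩, by
        intro j k hk ⟨h1, h2⟩
        exact σ.2.1 ⟨j, by omega⟩ ⟨k, by omega⟩ hk ⟨h1, h2⟩⟩,
       ⟨fun j => σ.1 ⟨a + 2 + j, by omega⟩, by
        intro j k hk ⟨h1, h2⟩
        exact σ.2.1 ⟨a+2+j, by omega⟩ ⟨a+2+k, by omega⟩
          (show a+2+(k:ℕ) = a+2+(j:ℕ)+1 by omega) ⟨h1, h2⟩⟩)
    invFun := fun p => ⟨fibGlue n a ha p.1.1 p.2.1, by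
      constructor
      · intro j k hk hh
        obtain ⟨h1, h2⟩ := hh
        by_cases hk1 : (k : ℕ) < a - 1
        · have hj1 : (j : ℕ) < a - 1 := by omega
          rw [fibGlue_left ha _ _ j hj1] at h1
          rw [fibGlue_left ha _ _ k hk1] at h2
          exact p.1.2 ⟨j, hj1⟩ ⟨k, hk1⟩ hk ⟨h1, h2⟩
        · by_cases hk2 : (k : ℕ) = a
          · rw [fibGlue_gap ha _ _ j (by omega) (by omega) (by omega)] at h1
            exact absurd h1 (by simp)
          · by_cases hk3 : a + 2 ≤ (k : ℕ)
            · by_cases hj3 : a + 2 ≤ (j : ℕ)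
              · rw [fibGlue_right ha _ _ j hj3] at h1
                rw [fibGlue_right ha _ _ k hk3] at h2
                exact p.2.2 ⟨(j:ℕ) - (a+2), by omega⟩ ⟨(k:ℕ) - (a+2), by omega⟩
                  (show (k:ℕ)-(a+2) = (j:ℕ)-(a+2)+1 by omega) ⟨h1, h2⟩
              · rw [fibGlue_gap ha _ _ j (by omega) (by omega) (by omega)] at h1
                exact absurd h1 (by simp)
            · rw [fibGlue_gap ha _ _ k hk1 hk2 hk3] at h2
              exact absurd h2 (by simp)
      · exact fibGlue_a ha _ _ ⟨a, ha⟩ rfl⟩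
    left_inv := fun σ => by
      apply Subtype.ext
      funext m
      dsimp only
      by_cases h1 : (m : ℕ) < a - 1
      · rw [fibGlue_left ha _ _ m h1]
      · by_cases h2 : (m : ℕ) = a
        · rw [fibGlue_a ha _ _ m h2, show m = (⟨a, ha⟩ : Fin n) from Fin.ext h2]
          exact σ.2.2.symm
        · by_cases h3 : a + 2 ≤ (m : ℕ)
          · rw [fibGlue_right ha _ _ m h3]
            exact congrArg _ (Fin.ext (show a + 2 + ((m:ℕ) - (a+2)) = (m:ℕ) by omega))
          · rw [fibGlue_gap ha _ _ m h1 h2 h3]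
            have ht : σ.1 ⟨a, ha⟩ = true := σ.2.2
            have hcase : ((m : ℕ) = a - 1 ∧ 1 ≤ a) ∨ (m : ℕ) = a + 1 := by omega
            rcases hcase with ⟨hm, ha1⟩ | hm
            · have hv := σ.2.1 m ⟨a, ha⟩ (show a = (m:ℕ) + 1 by omega)
              by_contra hc
              exact hv ⟨(Bool.not_eq_false _).mp (Ne.symm hc), ht⟩
            · have hv := σ.2.1 ⟨a, ha⟩ m (show (m:ℕ) = a + 1 by omega)
              by_contra hc
              exact hv ⟨ht, (Bool.not_eq_false _).mp (Ne.symm hc)⟩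
    right_inv := fun p => by
      apply Prod.ext
      · apply Subtype.ext
        funext j
        dsimp only
        rw [fibGlue_left ha _ _ _ (show (((⟨(j:ℕ), by omega⟩ : Fin n)) : ℕ) < a - 1 from j.2)]
      · apply Subtype.ext
        funext j
        dsimp only
        rw [fibGlue_right ha _ _ (⟨a + 2 + (j:ℕ), by omega⟩ : Fin n)
          (show a + 2 ≤ a + 2 + (j:ℕ) by omega)]
        exact congrArg _ (Fin.ext (show a + 2 + (j:ℕ) - (a+2) = (j:ℕ) by omega)) }
  rw [Nat.card_congr key, Nat.card_prod, card_FibS, card_FibS]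
  congr 1
  · rcases Nat.eq_zero_or_pos a with h | h
    · subst h; rfl
    · congr 1; omega
  · rcases (by omega : a + 1 = n ∨ a + 2 ≤ n) with h | h
    · rw [show n - a - 2 = 0 from by omega, show n - a = 1 from by omega]
      rfl
    · congr 1; omega

theorem fib_count_one_at_pos (n i : ℕ) (hi : 1 ≤ i) (hn : i ≤ n) :
    Nat.card {σ : Fin n → Bool //
      (∀ j k : Fin n, (k : ℕ) = (j : ℕ) + 1 → ¬(σ j = true ∧ σ k = true)) ∧
      σ ⟨i - 1, by omega⟩ = true} =
    Nat.fib i * Nat.fib (n - i + 1) := by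
  have e1 : i - 1 + 1 = i := by omega
  have e2 : n - (i - 1) = n - i + 1 := by omega
  have h := fib_split n (i - 1) (by omega)
  exact h.trans (by rw [e1, e2])
end

section
/- The sequence ρ_{n,i} = F_i · F_{n-i+1} / F_{n+2} (with i fixed) converges as n → ∞ to (α^i − β^i)/(√5 · α^{i+1}), where α = (1+√5)/2 and β = (1−√5)/2. -/
/-! Substituting `n = m + i`, the ratio is `F_i · F_{m+1} / F_{(m+1)+(i+1)}`. Since consecutive
quotients `F_n / F_{n+1}` tend to `φ⁻¹`, quotients `F_n / F_{n+k}` at distance `k` tend to `φ⁻ᵏ`,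
so the limit is `F_i / φ^(i+1)`, which is the stated value by Binet's formula. -/

open Filter Topology Real
open scoped goldenRatio

lemma tendsto_div_apply_add_of_tendsto_div_apply_succ {K : Type*} [Field K] [TopologicalSpace K]
    [ContinuousMul K] {u : ℕ → K} {r : K} (hu : ∀ᶠ n in atTop, u n ≠ 0)
    (h : Tendsto (fun n ↦ u n / u (n + 1)) atTop (𝓝 r)) (k : ℕ) :
    Tendsto (fun n ↦ u n / u (n + k)) atTop (𝓝 (r ^ k)) := by
  induction k with
  | zero =>
    refine tendsto_const_nhds.congr' ?_
    filter_upwards [hu] with n hn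
    simp [hn]
  | succ k ih =>
    rw [pow_succ]
    refine (ih.mul (h.comp (tendsto_add_atTop_nat k))).congr' ?_
    filter_upwards [tendsto_add_atTop_nat k hu] with n hnk
    rw [Function.comp_apply, ← add_assoc, div_mul_div_cancel₀ hnk]

lemma tendsto_fib_div_fib_add_atTop (k : ℕ) :
    Tendsto (fun n ↦ (Nat.fib n / Nat.fib (n + k) : ℝ)) atTop (𝓝 ((φ ^ k)⁻¹)) := by
  rw [← inv_pow]
  refine tendsto_div_apply_add_of_tendsto_div_apply_succ ?_ ?_ k
  · filter_upwards [eventually_ge_atTop 1] with n hn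
    exact_mod_cast (Nat.fib_pos.mpr hn).ne'
  · rw [inv_goldenRatio]
    exact tendsto_fib_div_fib_succ_atTop

theorem fib_density_limit (i : ℕ) :
    Filter.Tendsto
      (fun n : ℕ => (Nat.fib i * Nat.fib (n - i + 1) : ℝ) / Nat.fib (n + 2))
      Filter.atTop
      (nhds ((((1 + Real.sqrt 5) / 2) ^ i - ((1 - Real.sqrt 5) / 2) ^ i) /
        (Real.sqrt 5 * ((1 + Real.sqrt 5) / 2) ^ (i + 1)))) := by
  rw [← tendsto_add_atTop_iff_nat i]
  have h := ((tendsto_fib_div_fib_add_atTop (i + 1)).comp (tendsto_add_atTop_nat 1)).const_mul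
    (Nat.fib i : ℝ)
  convert h using 2 with m
  · simp only [Function.comp_apply, Nat.add_sub_cancel, mul_div_assoc]
    ring_nf
  · rw [coe_fib_eq]
    field_simp
end

section
/- For 1 ≤ k < l ≤ n, the number of binary strings of length n with no two adjacent 1's, with σ_k = 1 and σ_l = 1, equals F_k · F_{l-k-1} · F_{n-l+1}. -/
/-!
Cutting a string at its two prescribed `1`s leaves three independent pieces, each of which must
avoid `11` also together with the letters flanking it. Strings of length `m` flanked by the letters
`a` and `b` number `F (m + 2 - a - b)`: splitting off the first letter gives the recursion of the
transfer matrix `[[1, 1], [1, 0]]`, whose powers consist of Fibonacci numbers.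
-/

open List

theorem List.take_append_cons_drop {α : Type*} {l : List α} {m : ℕ} {c : α}
    (h : l[m]? = some c) : l.take m ++ c :: l.drop (m + 1) = l := by
  obtain ⟨hm, rfl⟩ := getElem?_eq_some_iff.mp h
  rw [← drop_eq_getElem_cons, take_append_drop]

theorem List.isChain_cons_append_cons_append {α : Type*} {R : α → α → Prop} {a b c : α}
    {p q : List α} :
    IsChain R (a :: (p ++ c :: q ++ [b])) ↔
      IsChain R (a :: (p ++ [c])) ∧ IsChain R (c :: (q ++ [b])) := by
  rw [append_assoc, cons_append, isChain_cons_split]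

theorem List.isChain_ofFn_iff_forall_succ {α : Type*} {R : α → α → Prop} {n : ℕ}
    {σ : Fin n → α} :
    IsChain R (ofFn σ) ↔ ∀ i j : Fin n, (j : ℕ) = i + 1 → R (σ i) (σ j) := by
  rw [isChain_ofFn]
  constructor
  · rintro h ⟨i, hi⟩ ⟨j, hj⟩ rfl
    exact h i hj
  · exact fun h i hi => h _ _ rfl

theorem List.ofFn_getElem_of_length_eq {α : Type*} {l : List α} {n : ℕ} (h : l.length = n) :
    ofFn (fun i : Fin n => l[i.1]'(h ▸ i.2)) = l := by
  subst h
  exact ofFn_getElem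

abbrev NotBothTrue (x y : Bool) : Prop := ¬(x = true ∧ y = true)

theorem isChain_false_cons_append_false {s : List Bool} :
    IsChain NotBothTrue (false :: (s ++ [false])) ↔ IsChain NotBothTrue s := by
  simp [isChain_cons, isChain_append]

-- A flanking `false` acts as no neighbour at all: `Flanked false false m` are the plain strings
-- of length `m` without `11`.
abbrev Flanked (a b : Bool) (m : ℕ) : Type :=
  {s : List Bool // s.length = m ∧ IsChain NotBothTrue (a :: (s ++ [b]))}

namespace Flanked

instance (a b : Bool) (m : ℕ) : Finite (Flanked a b m) :=
  ((finite_length_eq Bool m).subset fun _ hs => hs.1).to_subtype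

def ofFnEquiv (n : ℕ) :
    {σ : Fin n → Bool // ∀ i j : Fin n, (j : ℕ) = i + 1 → ¬(σ i = true ∧ σ j = true)} ≃
      Flanked false false n where
  toFun σ := ⟨ofFn σ.1, length_ofFn,
    isChain_false_cons_append_false.mpr (isChain_ofFn_iff_forall_succ.mpr σ.2)⟩
  invFun s := ⟨fun i => s.1[i.1]'(by simp [s.2.1]),
    isChain_ofFn_iff_forall_succ.mp <| by
      rw [ofFn_getElem_of_length_eq s.2.1]
      exact isChain_false_cons_append_false.mp s.2.2⟩
  left_inv σ := Subtype.ext <| funext fun i => by simp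
  right_inv s := Subtype.ext <| ofFn_getElem_of_length_eq s.2.1

variable {a b : Bool}

theorem isChain_take_and_drop {c : Bool} {m N : ℕ} (s : Flanked a b N)
    (hs : s.1[m]? = some c) :
    IsChain NotBothTrue (a :: (s.1.take m ++ [c])) ∧
      IsChain NotBothTrue (c :: (s.1.drop (m + 1) ++ [b])) := by
  rw [← isChain_cons_append_cons_append, take_append_cons_drop hs]
  exact s.2.2

def splitAt (c : Bool) {m m' N : ℕ} (h : m + 1 + m' = N) :
    {s : Flanked a b N // s.1[m]? = some c} ≃ Flanked a c m × Flanked c b m' where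
  toFun s :=
    (⟨s.1.1.take m, by simp [s.1.2.1]; omega, (isChain_take_and_drop s.1 s.2).1⟩,
      ⟨s.1.1.drop (m + 1), by simp [s.1.2.1]; omega, (isChain_take_and_drop s.1 s.2).2⟩)
  invFun pq := ⟨⟨pq.1.1 ++ c :: pq.2.1, by simp [pq.1.2.1, pq.2.2.1]; omega,
    isChain_cons_append_cons_append.mpr ⟨pq.1.2.2, pq.2.2.2⟩⟩, by simp [pq.1.2.1]⟩
  left_inv s := Subtype.ext <| Subtype.ext <| take_append_cons_drop s.2
  right_inv pq :=
    Prod.ext (Subtype.ext <| by simp [pq.1.2.1]) (Subtype.ext <| by simp [← pq.1.2.1])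

theorem card_zero_of_notBothTrue (h : NotBothTrue a b) : Nat.card (Flanked a b 0) = 1 :=
  Nat.card_eq_one_iff_unique.mpr
    ⟨⟨fun s t => Subtype.ext <| by
      rw [eq_nil_of_length_eq_zero s.2.1, eq_nil_of_length_eq_zero t.2.1]⟩,
    ⟨⟨[], rfl, by simpa using h⟩⟩⟩

theorem card_zero_true_true : Nat.card (Flanked true true 0) = 0 :=
  have : IsEmpty (Flanked true true 0) :=
    ⟨fun ⟨s, hs, hc⟩ => by simp [eq_nil_of_length_eq_zero hs] at hc⟩
  Nat.card_of_isEmpty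

theorem card_zero : Nat.card (Flanked a b 0) = Nat.fib (2 - a.toNat - b.toNat) := by
  cases a <;> cases b <;> simp [card_zero_of_notBothTrue, card_zero_true_true]

theorem card_succ (m : ℕ) :
    Nat.card (Flanked a b (m + 1)) =
      ∑ c, Nat.card (Flanked a c 0) * Nat.card (Flanked c b m) := by
  let head (s : Flanked a b (m + 1)) : Bool := s.1[0]'(by simp [s.2.1])
  rw [← Nat.card_congr (Equiv.sigmaFiberEquiv head), Nat.card_sigma]
  refine Fintype.sum_congr _ _ fun c => ?_
  rw [← Nat.card_prod, ← Nat.card_congr (splitAt (m := 0) (m' := m) (N := m + 1) c (by omega))]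
  exact Nat.card_congr <| Equiv.subtypeEquivRight fun s => by simp [head, s.2.1]

theorem card_eq_fib (m : ℕ) :
    Nat.card (Flanked a b m) = Nat.fib (m + 2 - a.toNat - b.toNat) := by
  induction m generalizing a with
  | zero => exact card_zero
  | succ m ih =>
    rw [card_succ, Fintype.sum_bool, card_zero, card_zero, ih, ih]
    cases a <;> cases b <;> simp [Nat.fib_add_two]

theorem card_pinned_pair {c d : Bool} {i j N : ℕ} (hij : i < j) (hjN : j < N) :
    Nat.card {s : Flanked a b N // s.1[i]? = some c ∧ s.1[j]? = some d} =
      Nat.card (Flanked a c i) * Nat.card (Flanked c d (j - i - 1)) *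
        Nat.card (Flanked d b (N - j - 1)) := by
  calc _ = Nat.card {x : {s : Flanked a b N // s.1[j]? = some d} // x.1.1[i]? = some c} :=
        Nat.card_congr <| (Equiv.subtypeEquivRight fun _ => and_comm).trans
          (Equiv.subtypeSubtypeEquivSubtypeInter _ _).symm
    _ = Nat.card {pq : Flanked a d j × Flanked d b (N - j - 1) // pq.1.1[i]? = some c} :=
        Nat.card_congr <| Equiv.subtypeEquiv (splitAt d (by omega)) fun s => by
          simp [splitAt, hij]
    _ = _ := by
      rw [Nat.card_congr (Equiv.prodSubtypeFstEquivSubtypeProd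
          (p := fun p : Flanked a d j => p.1[i]? = some c)), Nat.card_prod,
        Nat.card_congr (splitAt (m' := j - i - 1) c (by omega)), Nat.card_prod]

end Flanked

theorem fib_count_11 (n k l : ℕ) (hk : 1 ≤ k) (hkl : k < l) (hln : l ≤ n) :
    Nat.card {σ : Fin n → Bool //
      (∀ i j : Fin n, (j : ℕ) = (i : ℕ) + 1 → ¬(σ i = true ∧ σ j = true)) ∧
      σ ⟨k - 1, by omega⟩ = true ∧ σ ⟨l - 1, by omega⟩ = true} =
    Nat.fib k * Nat.fib (l - k - 1) * Nat.fib (n - l + 1) := by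
  have hk' : k - 1 < n := by omega
  have hl' : l - 1 < n := by omega
  calc _ = Nat.card {s : Flanked false false n //
          s.1[k - 1]? = some true ∧ s.1[l - 1]? = some true} :=
        Nat.card_congr <| (Equiv.subtypeSubtypeEquivSubtypeInter _ _).symm.trans <|
          Equiv.subtypeEquiv (Flanked.ofFnEquiv n) fun σ => by
            simp [Flanked.ofFnEquiv, hk', hl']
    _ = _ := by
      rw [Flanked.card_pinned_pair (by omega) (by omega), Flanked.card_eq_fib,
        Flanked.card_eq_fib, Flanked.card_eq_fib]
      congr 3 <;> simp <;> omega
end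

section
/- The expression C^F_{n,k,l} = (F_{k+1}F_{l-k+1}F_{n-l+2} + F_k F_{l-k-1}F_{n-l+1} − F_{k+1}F_{l-k}F_{n-l+1} − F_k F_{l-k}F_{n-l+2})/F_{n+2} is invariant under the substitution (k,l) ↦ (n+1−l, n+1−k), for 1 ≤ k < l ≤ n. -/
theorem fib_correlation_symmetry (n k l : ℕ) (hk : 1 ≤ k) (hkl : k < l) (hln : l ≤ n) :
    ((Nat.fib (k + 1) * Nat.fib (l - k + 1) * Nat.fib (n - l + 2) : ℤ) +
      Nat.fib k * Nat.fib (l - k - 1) * Nat.fib (n - l + 1) -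
      Nat.fib (k + 1) * Nat.fib (l - k) * Nat.fib (n - l + 1) -
      Nat.fib k * Nat.fib (l - k) * Nat.fib (n - l + 2)) =
    ((Nat.fib ((n + 1 - l) + 1) * Nat.fib ((n + 1 - k) - (n + 1 - l) + 1) *
        Nat.fib (n - (n + 1 - k) + 2) : ℤ) +
      Nat.fib (n + 1 - l) * Nat.fib ((n + 1 - k) - (n + 1 - l) - 1) *
        Nat.fib (n - (n + 1 - k) + 1) -
      Nat.fib ((n + 1 - l) + 1) * Nat.fib ((n + 1 - k) - (n + 1 - l)) *
        Nat.fib (n - (n + 1 - k) + 1) -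
      Nat.fib (n + 1 - l) * Nat.fib ((n + 1 - k) - (n + 1 - l)) *
        Nat.fib (n - (n + 1 - k) + 2)) := by
  have h1 : (n + 1 - l) + 1 = n - l + 2 := by omega
  have h2 : (n + 1 - k) - (n + 1 - l) + 1 = l - k + 1 := by omega
  have h3 : n - (n + 1 - k) + 2 = k + 1 := by omega
  have h4 : (n + 1 - k) - (n + 1 - l) - 1 = l - k - 1 := by omega
  have h5 : n - (n + 1 - k) + 1 = k := by omega
  have h6 : (n + 1 - k) - (n + 1 - l) = l - k := by omega
  have h7 : n + 1 - l = n - l + 1 := by omega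
  rw [h2, h3, h4, h5, h6, h1, h7]
  ring
end

section
/- For n ≥ 2, F_{n-k+2}F_k + F_{n-k}F_{k-2} + 2F_{n-k+1}F_{k-1} = L_n for all 2 ≤ k ≤ n, where L is the Lucas sequence. -/
def lucas : ℕ → ℕ
  | 0 => 2
  | 1 => 1
  | n + 2 => lucas (n + 1) + lucas n

lemma lucas_eq_fib : ∀ n, lucas (n + 1) = Nat.fib n + Nat.fib (n + 2)
  | 0 => rfl
  | 1 => rfl
  | n + 2 => by
    rw [lucas, lucas_eq_fib (n+1), lucas_eq_fib n,
      Nat.fib_add_two (n := n + 2), Nat.fib_add_two (n := n)]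
    ring

theorem lucas_pair_counts_sum (n k : ℕ) (hn : 2 ≤ n) (hk : 2 ≤ k) (hkn : k ≤ n) :
    Nat.fib (n - k + 2) * Nat.fib k + Nat.fib (n - k) * Nat.fib (k - 2) +
      2 * (Nat.fib (n - k + 1) * Nat.fib (k - 1)) = lucas n := by
  obtain ⟨j, rfl⟩ : ∃ j, k = j + 2 := ⟨k - 2, by omega⟩
  obtain ⟨m, rfl⟩ : ∃ m, n = m + j + 2 := ⟨n - j - 2, by omega⟩
  have h1 : m + j + 2 - (j + 2) = m := by omega
  have h2 : j + 2 - 2 = j := by omega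
  have h3 : j + 2 - 1 = j + 1 := by omega
  rw [h1, h2, h3]
  have e1 : m + j + 2 = (m + j + 1) + 1 := by ring
  rw [e1, lucas_eq_fib]
  have a1 : Nat.fib (m + j + 1) = Nat.fib m * Nat.fib j + Nat.fib (m+1) * Nat.fib (j+1) := by
    have := Nat.fib_add m j; linarith
  have a2 : Nat.fib (m + j + 1 + 2) = Nat.fib (m+1) * Nat.fib (j+1) + Nat.fib (m+2) * Nat.fib (j+2) := by
    have := Nat.fib_add (m+1) (j+1)
    have e : m + 1 + (j + 1) + 1 = m + j + 1 + 2 := by ring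
    rw [e] at this; linarith
  rw [a1, a2]; ring
end
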